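/- arXiv:1210.4707 — 2 statements merged into one kernel-verified Lean document; each statement's English description precedes it below -/
import Mathlib

section
/- Let (Γ, G) be a boundary pair for h, with Neumann operator H^N (associated with h) and Dirichlet operator H^D. For z ∉ spec(H^D) ∪ spec(H^N), the weak Dirichlet-to-Neumann operator Λ̃(z) : G^{1/2} → G^{−1/2} (defined by ⟨Λ̃(z)φ, ψ⟩ = l_z(φ,ψ)) is bijective, with inverse Λ̃(z)⁻¹ = Γ (H̃^N − z)⁻¹ Γ*, where (H̃^N − z)⁻¹ : H^{−1} → H¹ is the extended Neumann resolvent and Γ* : G^{−1/2} → H^{−1} is the dual of Γ. -/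
/-!
Since `S(-1) Γ` is the `H¹`-orthogonal projection onto `(ker Γ)ᗮ`, it is a contraction, so
`f ↦ F (Γ f)` is a bounded conjugate-linear functional on `H¹`; by Riesz it is `⟪·, w⟫` for some
`w ∈ H¹`. The weak Neumann problem `(h - z)(f, u) = ⟪f, w⟫` is solved by
`u = w + (H^N - z)⁻¹ (1 + z) w`, and uniquely so because `z ∉ spec H^N`. As its right-hand side
vanishes on `ker Γ`, `u` also solves the Dirichlet problem, hence `u = S(z) Γ u` and `Γ u` solves
`Λ̃(z) φ = F`. Conversely, for any solution `φ` the function `S(z) φ` is a weak Neumann solution,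
so `S(z) φ = u` and `φ = Γ u`.
-/

/-- `R` is a (bounded, everywhere defined, two-sided) resolvent of the (possibly
unbounded) operator `T` at the spectral point `z`, witnessing `z ∉ spec T`. -/
def ResolventAt {E : Type*} [NormedAddCommGroup E] [NormedSpace ℂ E]
    (T : E →ₗ.[ℂ] E) (z : ℂ) (R : E →L[ℂ] E) : Prop :=
  (∀ x : E, ∃ hx : R x ∈ T.domain, T ⟨R x, hx⟩ - z • R x = x) ∧
  ∀ u : T.domain, R (T u - z • (u : E)) = (u : E)

open scoped InnerProductSpace

theorem ResolventAt.eq_zero_of_apply_eq_smul {E : Type*} [NormedAddCommGroup E] [NormedSpace ℂ E]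
    {T : E →ₗ.[ℂ] E} {z : ℂ} {R : E →L[ℂ] E} (hR : ResolventAt T z R) {u : T.domain}
    (hu : T u = z • (u : E)) : (u : E) = 0 := by
  simpa [hu] using (hR.2 u).symm

section InnerProductSpace

variable {E : Type*} [NormedAddCommGroup E] [InnerProductSpace ℂ E]

theorem norm_le_norm_of_inner_sub_self_eq_zero {f p : E} (h : ⟪f - p, p⟫_ℂ = 0) :
    ‖p‖ ≤ ‖f‖ := by
  have hpyth := norm_add_sq_eq_norm_sq_add_norm_sq_of_inner_eq_zero (f - p) p h
  rw [sub_add_cancel] at hpyth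
  nlinarith [norm_nonneg p, norm_nonneg f, mul_self_nonneg ‖f - p‖]

theorem exists_eq_inner_of_conjLinear_of_bounded [CompleteSpace E] (Φ : E → ℂ)
    (hadd : ∀ x y, Φ (x + y) = Φ x + Φ y)
    (hsmul : ∀ (c : ℂ) x, Φ (c • x) = starRingEnd ℂ c * Φ x)
    (C : ℝ) (hbound : ∀ x, ‖Φ x‖ ≤ C * ‖x‖) : ∃ w : E, ∀ x, Φ x = ⟪x, w⟫_ℂ := by
  let L : E →ₗ[ℂ] ℂ :=
    { toFun := fun x => starRingEnd ℂ (Φ x)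
      map_add' := fun x y => by rw [hadd, map_add]
      map_smul' := fun c x => by simp [hsmul] }
  refine ⟨(InnerProductSpace.toDual ℂ E).symm
    (L.mkContinuous C fun x => by simpa [L] using hbound x), fun x => ?_⟩
  rw [← inner_conj_symm, InnerProductSpace.toDual_symm_apply]
  simp [L]

end InnerProductSpace

section WeakNeumann

variable {H H1 : Type*} [NormedAddCommGroup H] [InnerProductSpace ℂ H]
  [NormedAddCommGroup H1] [InnerProductSpace ℂ H1] {J : H1 →L[ℂ] H} {hform : H1 → H1 → ℂ}

theorem norm_dirichletSolution_rangeRestrict_le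
    (hpol : ∀ u v : H1, ⟪u, v⟫_ℂ = ⟪J u, J v⟫_ℂ + hform u v)
    {G : Type*} [NormedAddCommGroup G] [NormedSpace ℂ G] {Γ : H1 →L[ℂ] G}
    {S : LinearMap.range (Γ : H1 →ₗ[ℂ] G) → H1}
    (hS1 : ∀ φ (f : H1), Γ f = 0 → hform f (S φ) = (-1 : ℂ) * ⟪J f, J (S φ)⟫_ℂ)
    (hS2 : ∀ φ, Γ (S φ) = (φ : G)) (f : H1) :
    ‖S ((Γ : H1 →ₗ[ℂ] G).rangeRestrict f)‖ ≤ ‖f‖ := by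
  set p := S ((Γ : H1 →ₗ[ℂ] G).rangeRestrict f)
  have hker : Γ (f - p) = 0 := by simp [p, hS2]
  apply norm_le_norm_of_inner_sub_self_eq_zero
  linear_combination hpol (f - p) p + hS1 _ (f - p) hker

theorem exists_weak_neumann_solution
    (hpol : ∀ u v : H1, ⟪u, v⟫_ℂ = ⟪J u, J v⟫_ℂ + hform u v) {HN : H →ₗ.[ℂ] H}
    (hHNdom : ∀ u : HN.domain, ∃ u1 : H1, J u1 = (u : H) ∧
      ∀ f : H1, hform f u1 = ⟪J f, HN u⟫_ℂ)
    {z : ℂ} {RN : H →L[ℂ] H} (hRN : ResolventAt HN z RN) (w : H1) :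
    ∃ u : H1, ∀ f : H1, hform f u - z * ⟪J f, J u⟫_ℂ = ⟪f, w⟫_ℂ := by
  obtain ⟨hmem, hres⟩ := hRN.1 ((1 + z) • J w)
  obtain ⟨v, hJv, hv⟩ := hHNdom ⟨_, hmem⟩
  refine ⟨w + v, fun f => ?_⟩
  have hres_f : ⟪J f, HN ⟨_, hmem⟩⟫_ℂ - z * ⟪J f, J v⟫_ℂ = (1 + z) * ⟪J f, J w⟫_ℂ := by
    rw [show J v = RN ((1 + z) • J w) from hJv]
    simpa only [inner_sub_right, inner_smul_right] using congrArg (⟪J f, ·⟫_ℂ) hres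
  have hpol_sum := hpol f (w + v)
  simp only [map_add, inner_add_right] at hpol_sum ⊢
  linear_combination hpol f v - hpol_sum + hv f + hres_f

theorem weak_neumann_solution_unique
    (hpol : ∀ u v : H1, ⟪u, v⟫_ℂ = ⟪J u, J v⟫_ℂ + hform u v) (hJinj : Function.Injective J)
    {HN : H →ₗ.[ℂ] H}
    (hHNmax : ∀ (u1 : H1) (v : H), (∀ f : H1, hform f u1 = ⟪J f, v⟫_ℂ) →
      ∃ hu : J u1 ∈ HN.domain, HN ⟨J u1, hu⟩ = v)
    {z : ℂ} {RN : H →L[ℂ] H} (hRN : ResolventAt HN z RN) {u u' : H1}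
    (h : ∀ f : H1, hform f u - z * ⟪J f, J u⟫_ℂ = hform f u' - z * ⟪J f, J u'⟫_ℂ) :
    u = u' := by
  obtain ⟨hmem, hHN⟩ := hHNmax (u - u') (z • J (u - u')) fun f => by
    have hpol_sub := hpol f (u - u')
    simp only [map_sub, inner_sub_right, inner_smul_right] at hpol_sub ⊢
    linear_combination hpol f u - hpol f u' - hpol_sub + h f
  have hJ : J (u - u') = 0 := hRN.eq_zero_of_apply_eq_smul hHN
  exact sub_eq_zero.mp (hJinj (hJ.trans (map_zero J).symm))

end WeakNeumann

/-- Elements `F` of `G^{-1/2}` are modelled as conjugate-linear functionals on `ran Γ` bounded in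
the norm `‖S(-1) ·‖_{H¹}`; `Λ̃(z)⁻¹ F` is `Γ u` for the weak Neumann solution
`u = (H̃N - z)⁻¹ Γ* F`, i.e. `(h - z)(f, u) = F (Γ f)` for all `f ∈ H¹`. -/
theorem weak_dtn_bijective_inverse_via_neumann_resolvent_general
    {H H1 G : Type*}
    [NormedAddCommGroup H] [InnerProductSpace ℂ H]
    [NormedAddCommGroup H1] [InnerProductSpace ℂ H1] [CompleteSpace H1]
    [NormedAddCommGroup G] [InnerProductSpace ℂ G]
    (J : H1 →L[ℂ] H) (hJinj : Function.Injective J)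
    (hform : H1 → H1 → ℂ)
    (hpol : ∀ u v : H1, (inner ℂ u v : ℂ) = (inner ℂ (J u) (J v) : ℂ) + hform u v)
    (Γ : H1 →L[ℂ] G)
    -- the Neumann operator `HN`, associated with the form `h`
    (HN : H →ₗ.[ℂ] H)
    (hHNdom : ∀ u : HN.domain, ∃ u1 : H1, J u1 = (u : H) ∧
      ∀ f : H1, hform f u1 = (inner ℂ (J f) (HN u) : ℂ))
    (hHNmax : ∀ (u1 : H1) (v : H),
      (∀ f : H1, hform f u1 = (inner ℂ (J f) v : ℂ)) →
      ∃ hu : J u1 ∈ HN.domain, HN ⟨J u1, hu⟩ = v)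
    (z : ℂ)
    -- `z ∉ spec HN`
    (RN : H →L[ℂ] H) (hRN : ResolventAt HN z RN)
    -- `z ∉ spec HD`: the Dirichlet solution operator at `z` exists and is unique
    (Sz : (LinearMap.range (Γ : H1 →ₗ[ℂ] G) : Submodule ℂ G) →ₗ[ℂ] H1)
    (hSz2 : ∀ φ : (LinearMap.range (Γ : H1 →ₗ[ℂ] G) : Submodule ℂ G), Γ (Sz φ) = (φ : G))
    (hSz3 : ∀ u : H1, (∀ f : H1, Γ f = 0 → hform f u = z * (inner ℂ (J f) (J u) : ℂ)) →
      ∀ hm : Γ u ∈ LinearMap.range (Γ : H1 →ₗ[ℂ] G), Sz ⟨Γ u, hm⟩ = u)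
    -- the Dirichlet solution operator at `-1`, giving the `G^{1/2}`-norm `‖Sm ·‖_{H¹}`
    (Sm : (LinearMap.range (Γ : H1 →ₗ[ℂ] G) : Submodule ℂ G) →ₗ[ℂ] H1)
    (hSm1 : ∀ (φ : (LinearMap.range (Γ : H1 →ₗ[ℂ] G) : Submodule ℂ G)) (f : H1), Γ f = 0 →
      hform f (Sm φ) = (-1 : ℂ) * (inner ℂ (J f) (J (Sm φ)) : ℂ))
    (hSm2 : ∀ φ : (LinearMap.range (Γ : H1 →ₗ[ℂ] G) : Submodule ℂ G), Γ (Sm φ) = (φ : G))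
    (F : ↥(LinearMap.range (Γ : H1 →ₗ[ℂ] G)) → ℂ)
    (hFadd : ∀ a b, F (a + b) = F a + F b)
    (hFsmul : ∀ (c : ℂ) a, F (c • a) = (starRingEnd ℂ) c * F a)
    (hFbdd : ∃ C : ℝ, ∀ η, ‖F η‖ ≤ C * ‖Sm η‖) :
      -- bijectivity of `Λ̃(z)`
      (∃! φ : (LinearMap.range (Γ : H1 →ₗ[ℂ] G) : Submodule ℂ G),
        ∀ (η : (LinearMap.range (Γ : H1 →ₗ[ℂ] G) : Submodule ℂ G)) (g : H1), Γ g = (η : G) →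
          hform g (Sz φ) - z * (inner ℂ (J g) (J (Sz φ)) : ℂ) = F η) ∧
      -- the inverse is `Γ (H̃N - z)⁻¹ Γ*`
      (∀ φ : (LinearMap.range (Γ : H1 →ₗ[ℂ] G) : Submodule ℂ G),
        (∀ (η : (LinearMap.range (Γ : H1 →ₗ[ℂ] G) : Submodule ℂ G)) (g : H1), Γ g = (η : G) →
          hform g (Sz φ) - z * (inner ℂ (J g) (J (Sz φ)) : ℂ) = F η) →
        ∃ u : H1, Γ u = (φ : G) ∧
          ∀ f : H1, hform f u - z * (inner ℂ (J f) (J u) : ℂ) =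
            F ⟨Γ f, LinearMap.mem_range_self (Γ : H1 →ₗ[ℂ] G) f⟩) := by
  set Γr := (Γ : H1 →ₗ[ℂ] G).rangeRestrict
  obtain ⟨C, hC⟩ := hFbdd
  obtain ⟨w, hw⟩ := exists_eq_inner_of_conjLinear_of_bounded (fun f => F (Γr f))
    (fun f g => by rw [map_add, hFadd]) (fun c f => by rw [map_smul, hFsmul]) |C| fun f =>
      (hC _).trans <| mul_le_mul (le_abs_self C)
        (norm_dirichletSolution_rangeRestrict_le hpol hSm1 hSm2 f) (norm_nonneg _) (abs_nonneg C)
  obtain ⟨u, hu⟩ := exists_weak_neumann_solution hpol hHNdom hRN w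
  replace hu : ∀ f, hform f u - z * ⟪J f, J u⟫_ℂ = F (Γr f) := fun f => (hu f).trans (hw f).symm
  have hSzu : Sz (Γr u) = u := hSz3 u (fun f hf => by
    have hF0 : F (Γr f) = 0 := by
      rw [show Γr f = 0 from Subtype.ext hf]
      simpa using hFsmul 0 0
    linear_combination hu f + hF0) _
  have hDtN_iff : ∀ φ, (∀ (η : LinearMap.range (Γ : H1 →ₗ[ℂ] G)) (g : H1), Γ g = (η : G) →
      hform g (Sz φ) - z * ⟪J g, J (Sz φ)⟫_ℂ = F η) ↔
      ∀ f, hform f (Sz φ) - z * ⟪J f, J (Sz φ)⟫_ℂ = F (Γr f) := fun φ =>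
    ⟨fun h f => h _ f rfl, fun h η g hg => by rw [h g]; congr; exact Subtype.ext hg⟩
  refine ⟨⟨Γr u, (hDtN_iff _).2 (by rwa [hSzu]), fun φ hφ => ?_⟩,
    fun φ hφ => ⟨Sz φ, hSz2 φ, (hDtN_iff φ).1 hφ⟩⟩
  have hSzφ : Sz φ = u := weak_neumann_solution_unique hpol hJinj hHNmax hRN fun f => by
    rw [(hDtN_iff φ).1 hφ f, hu]
  exact Subtype.ext (by rw [← hSz2 φ, hSzφ]; rfl)

/-- Let `(Γ, G)` be a boundary pair for `h` with Neumann operator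
`HN` and Dirichlet operator (implicit through the Dirichlet solution operator `Sz`).
For `z ∉ spec HD ∪ spec HN`, the weak Dirichlet-to-Neumann operator
`Λ̃(z) : G^{1/2} → G^{-1/2}`, `⟨Λ̃(z)φ, ψ⟩ = l_z(φ,ψ)`, is bijective, with inverse
`Λ̃(z)⁻¹ = Γ (H̃N - z)⁻¹ Γ*`.  Elements of `G^{-1/2}` are represented as conjugate-linear
functionals `F` on `ran Γ` bounded with respect to the `G^{1/2}`-norm `‖S(-1)·‖_{H¹}`;
bijectivity means that for every such `F` there is a unique `φ ∈ ran Γ = G^{1/2}` with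
`l_z(φ, ·) = F`, and this `φ` equals `Γ u` with `u = (H̃N - z)⁻¹ Γ* F` the weak
Neumann solution of `(h - z)(u, f) = F(Γ f)` for all `f ∈ H¹`. -/
theorem weak_dtn_bijective_inverse_via_neumann_resolvent
    {H H1 G : Type*}
    [NormedAddCommGroup H] [InnerProductSpace ℂ H] [CompleteSpace H]
    [NormedAddCommGroup H1] [InnerProductSpace ℂ H1] [CompleteSpace H1]
    [NormedAddCommGroup G] [InnerProductSpace ℂ G] [CompleteSpace G]
    (J : H1 →L[ℂ] H) (hJinj : Function.Injective J) (hJdense : DenseRange J)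
    (hform : H1 → H1 → ℂ)
    (hpol : ∀ u v : H1, (inner ℂ u v : ℂ) = (inner ℂ (J u) (J v) : ℂ) + hform u v)
    (Γ : H1 →L[ℂ] G)
    (hker : Dense (J '' ((LinearMap.ker (Γ : H1 →ₗ[ℂ] G) : Submodule ℂ H1) : Set H1)))
    (hran : Dense ((LinearMap.range (Γ : H1 →ₗ[ℂ] G) : Submodule ℂ G) : Set G))
    -- the Neumann operator `HN`, associated with the form `h`
    (HN : H →ₗ.[ℂ] H)
    (hHNdom : ∀ u : HN.domain, ∃ u1 : H1, J u1 = (u : H) ∧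
      ∀ f : H1, hform f u1 = (inner ℂ (J f) (HN u) : ℂ))
    (hHNmax : ∀ (u1 : H1) (v : H),
      (∀ f : H1, hform f u1 = (inner ℂ (J f) v : ℂ)) →
      ∃ hu : J u1 ∈ HN.domain, HN ⟨J u1, hu⟩ = v)
    (hHNsym : ∀ u v : HN.domain, (inner ℂ (HN u) ((v : H)) : ℂ) = inner ℂ ((u : H)) (HN v))
    (z : ℂ)
    -- `z ∉ spec HN`
    (RN : H →L[ℂ] H) (hRN : ResolventAt HN z RN)
    -- `z ∉ spec HD`: the Dirichlet solution operator at `z` exists and is unique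
    (Sz : (LinearMap.range (Γ : H1 →ₗ[ℂ] G) : Submodule ℂ G) →ₗ[ℂ] H1)
    (hSz1 : ∀ (φ : (LinearMap.range (Γ : H1 →ₗ[ℂ] G) : Submodule ℂ G)) (f : H1), Γ f = 0 →
      hform f (Sz φ) = z * (inner ℂ (J f) (J (Sz φ)) : ℂ))
    (hSz2 : ∀ φ : (LinearMap.range (Γ : H1 →ₗ[ℂ] G) : Submodule ℂ G), Γ (Sz φ) = (φ : G))
    (hSz3 : ∀ u : H1, (∀ f : H1, Γ f = 0 → hform f u = z * (inner ℂ (J f) (J u) : ℂ)) →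
      ∀ hm : Γ u ∈ LinearMap.range (Γ : H1 →ₗ[ℂ] G), Sz ⟨Γ u, hm⟩ = u)
    -- the Dirichlet solution operator at `-1`, giving the `G^{1/2}`-norm `‖Sm ·‖_{H¹}`
    (Sm : (LinearMap.range (Γ : H1 →ₗ[ℂ] G) : Submodule ℂ G) →ₗ[ℂ] H1)
    (hSm1 : ∀ (φ : (LinearMap.range (Γ : H1 →ₗ[ℂ] G) : Submodule ℂ G)) (f : H1), Γ f = 0 →
      hform f (Sm φ) = (-1 : ℂ) * (inner ℂ (J f) (J (Sm φ)) : ℂ))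
    (hSm2 : ∀ φ : (LinearMap.range (Γ : H1 →ₗ[ℂ] G) : Submodule ℂ G), Γ (Sm φ) = (φ : G))
    (F : ↥(LinearMap.range (Γ : H1 →ₗ[ℂ] G)) → ℂ)
    (hFadd : ∀ a b, F (a + b) = F a + F b)
    (hFsmul : ∀ (c : ℂ) a, F (c • a) = (starRingEnd ℂ) c * F a)
    (hFbdd : ∃ C : ℝ, ∀ η, ‖F η‖ ≤ C * ‖Sm η‖) :
      -- bijectivity of `Λ̃(z)`
      (∃! φ : (LinearMap.range (Γ : H1 →ₗ[ℂ] G) : Submodule ℂ G),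
        ∀ (η : (LinearMap.range (Γ : H1 →ₗ[ℂ] G) : Submodule ℂ G)) (g : H1), Γ g = (η : G) →
          hform g (Sz φ) - z * (inner ℂ (J g) (J (Sz φ)) : ℂ) = F η) ∧
      -- the inverse is `Γ (H̃N - z)⁻¹ Γ*`
      (∀ φ : (LinearMap.range (Γ : H1 →ₗ[ℂ] G) : Submodule ℂ G),
        (∀ (η : (LinearMap.range (Γ : H1 →ₗ[ℂ] G) : Submodule ℂ G)) (g : H1), Γ g = (η : G) →
          hform g (Sz φ) - z * (inner ℂ (J g) (J (Sz φ)) : ℂ) = F η) →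
        ∃ u : H1, Γ u = (φ : G) ∧
          ∀ f : H1, hform f u - z * (inner ℂ (J f) (J u) : ℂ) =
            F ⟨Γ f, LinearMap.mem_range_self (Γ : H1 →ₗ[ℂ] G) f⟩) :=
  weak_dtn_bijective_inverse_via_neumann_resolvent_general J hJinj hform hpol Γ HN hHNdom hHNmax z
    RN hRN Sz hSz2 hSz3 Sm hSm1 hSm2 F hFadd hFsmul hFbdd
end

section
/- (Krein's resolvent formula, weak form.) Let (Γ, G) be a boundary pair for h with Neumann operator H^N, Dirichlet operator H^D, Dirichlet solution operators S(z) and weak DtN operators Λ̃(z). Then for z ∉ spec(H^D) ∪ spec(H^N): (H^N − z)⁻¹ − (H^D − z)⁻¹ = S(z) Λ̃(z)⁻¹ S(z̄)*, as operators H → H (where the Dirichlet resolvent is extended by 0 on the orthogonal complement of the closure of ker Γ in H, and S(z̄)* : H → G^{−1/2} is the restriction of the dual of S(z̄)). -/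
/-!
Lift `u = (H^N - z)⁻¹ f` and `w = (H^D - z)⁻¹ f` to `H¹`. Both satisfy `l_z(g, ·) = ⟨g, f⟩` for
test functions `g ∈ ker Γ`, so `d = u - w` is a weak solution of the Dirichlet problem with
boundary value `φ = Γ d`. Since `z ∉ spec H^D`, weak solutions are determined by their boundary
values, hence `d = S(z) φ`, which is the resolvent difference. For the DtN identity split a test
function `g` with `Γ g = η` as `(g - S(z̄) η) + S(z̄) η`: the first summand lies in `ker Γ`, so
`l_z` kills it against `d`; on the second, `l_z(S(z̄) η, u) = ⟨S(z̄) η, f⟩` because `u` solves the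
Neumann problem, while `l_z(S(z̄) η, w) = conj l_{z̄}(w, S(z̄) η) = 0` because `w ∈ ker Γ`.
-/

open ComplexConjugate

section BoundaryPair

variable {H H1 G : Type*}
  [NormedAddCommGroup H] [InnerProductSpace ℂ H]
  [NormedAddCommGroup H1] [InnerProductSpace ℂ H1]
  [NormedAddCommGroup G] [NormedSpace ℂ G]
  {J : H1 →L[ℂ] H} {hform : H1 → H1 → ℂ}

/-- The form `l_z` of the paper. -/
noncomputable def shiftedForm (hform : H1 → H1 → ℂ) (J : H1 →L[ℂ] H) (z : ℂ) (u v : H1) : ℂ :=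
  hform u v - z * inner ℂ (J u) (J v)

def IsWeakSolution (Γ : H1 →L[ℂ] G) (hform : H1 → H1 → ℂ) (J : H1 →L[ℂ] H) (z : ℂ)
    (v : H1) : Prop :=
  ∀ g : H1, Γ g = 0 → shiftedForm hform J z g v = 0

section Polarization

variable (hpol : ∀ u v : H1, (inner ℂ u v : ℂ) = (inner ℂ (J u) (J v) : ℂ) + hform u v)
include hpol

theorem shiftedForm_eq_inner (z : ℂ) (u v : H1) :
    shiftedForm hform J z u v = inner ℂ u v - (1 + z) * inner ℂ (J u) (J v) := by
  rw [shiftedForm, hpol]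
  ring

theorem shiftedForm_sub_left (z : ℂ) (u u' v : H1) :
    shiftedForm hform J z (u - u') v = shiftedForm hform J z u v - shiftedForm hform J z u' v := by
  simp only [shiftedForm_eq_inner hpol, map_sub, inner_sub_left]
  ring

theorem shiftedForm_sub_right (z : ℂ) (u v v' : H1) :
    shiftedForm hform J z u (v - v') = shiftedForm hform J z u v - shiftedForm hform J z u v' := by
  simp only [shiftedForm_eq_inner hpol, map_sub, inner_sub_right]
  ring

theorem shiftedForm_eq_conj_shiftedForm_swap (z : ℂ) (u v : H1) :
    shiftedForm hform J z u v = conj (shiftedForm hform J (conj z) v u) := by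
  simp only [shiftedForm_eq_inner hpol, map_sub, map_mul, map_add, map_one, inner_conj_symm,
    Complex.conj_conj]

theorem IsWeakSolution.sub {Γ : H1 →L[ℂ] G} {z : ℂ} {v w : H1}
    (hv : IsWeakSolution Γ hform J z v) (hw : IsWeakSolution Γ hform J z w) :
    IsWeakSolution Γ hform J z (v - w) := fun g hg => by
  rw [shiftedForm_sub_right hpol, hv g hg, hw g hg, sub_zero]

theorem IsWeakSolution.eq_of_map_eq (hJinj : Function.Injective J) {Γ : H1 →L[ℂ] G}
    {HD : H →ₗ.[ℂ] H}
    (hHDmax : ∀ (u1 : H1) (w : H), Γ u1 = 0 →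
      (∀ f : H1, Γ f = 0 → hform f u1 = (inner ℂ (J f) w : ℂ)) →
      ∃ hu : J u1 ∈ HD.domain, HD ⟨J u1, hu⟩ = w)
    {z : ℂ} {RD : H →L[ℂ] H} (hRD : ResolventAt HD z RD) {v w : H1}
    (hv : IsWeakSolution Γ hform J z v) (hw : IsWeakSolution Γ hform J z w)
    (hΓ : Γ v = Γ w) : v = w := by
  have hd := hv.sub hpol hw
  -- `J (v - w)` is an eigenvector of `HD` with eigenvalue `z`
  obtain ⟨hmem, hHD⟩ := hHDmax (v - w) (z • J (v - w)) (by rw [map_sub, hΓ, sub_self])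
    fun g hg => by rw [inner_smul_right]; exact sub_eq_zero.mp (hd g hg)
  have hzero := hRD.2 ⟨J (v - w), hmem⟩
  rw [hHD, sub_self, map_zero] at hzero
  exact sub_eq_zero.mp (hJinj (by rw [map_zero]; exact hzero.symm))

/-- The weak DtN identity, with `s = S(z̄) η`. -/
theorem shiftedForm_sub_eq_inner {Γ : H1 →L[ℂ] G} {z : ℂ} {f : H} {u w s g : H1}
    (hu : ∀ g : H1, shiftedForm hform J z g u = inner ℂ (J g) f) (hw : Γ w = 0)
    (huw : IsWeakSolution Γ hform J z (u - w)) (hs : IsWeakSolution Γ hform J (conj z) s)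
    (hg : Γ g = Γ s) :
    shiftedForm hform J z g (u - w) = inner ℂ (J s) f := by
  have hsw : shiftedForm hform J z s w = 0 := by
    rw [shiftedForm_eq_conj_shiftedForm_swap hpol, hs w hw, map_zero]
  calc shiftedForm hform J z g (u - w)
      = shiftedForm hform J z (g - s) (u - w) + (shiftedForm hform J z s u -
          shiftedForm hform J z s w) := by
        simp only [shiftedForm_sub_left hpol, shiftedForm_sub_right hpol]; ring
    _ = inner ℂ (J s) f := by
        rw [huw (g - s) (by rw [map_sub, hg, sub_self]), hu, hsw]; ring

end Polarization

theorem ResolventAt.exists_shiftedForm_eq_inner {T : H →ₗ.[ℂ] H} {z : ℂ} {R : H →L[ℂ] H}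
    (hR : ResolventAt T z R) (P : H1 → Prop)
    (hT : ∀ u : T.domain, ∃ u1 : H1, J u1 = (u : H) ∧ P u1 ∧
      ∀ g : H1, P g → hform g u1 = (inner ℂ (J g) (T u) : ℂ))
    (f : H) :
    ∃ u1 : H1, J u1 = R f ∧ P u1 ∧
      ∀ g : H1, P g → shiftedForm hform J z g u1 = inner ℂ (J g) f := by
  obtain ⟨hmem, hRf⟩ := hR.1 f
  obtain ⟨u1, hJu1, hPu1, hform_eq⟩ := hT ⟨R f, hmem⟩
  refine ⟨u1, hJu1, hPu1, fun g hg => ?_⟩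
  rw [shiftedForm, hform_eq g hg, hJu1, ← inner_smul_right, ← inner_sub_right, hRf]

end BoundaryPair

theorem krein_resolvent_formula_general
    {H H1 G : Type*}
    [NormedAddCommGroup H] [InnerProductSpace ℂ H]
    [NormedAddCommGroup H1] [InnerProductSpace ℂ H1]
    [NormedAddCommGroup G] [InnerProductSpace ℂ G]
    (J : H1 →L[ℂ] H) (hJinj : Function.Injective J)
    (hform : H1 → H1 → ℂ)
    (hpol : ∀ u v : H1, (inner ℂ u v : ℂ) = (inner ℂ (J u) (J v) : ℂ) + hform u v)
    (Γ : H1 →L[ℂ] G)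
    -- the Neumann operator `HN`, associated with the form `h`
    (HN : H →ₗ.[ℂ] H)
    (hHNdom : ∀ u : HN.domain, ∃ u1 : H1, J u1 = (u : H) ∧
      ∀ f : H1, hform f u1 = (inner ℂ (J f) (HN u) : ℂ))
    -- the Dirichlet operator `HD`, associated with `h` restricted to `ker Γ`
    (HD : H →ₗ.[ℂ] H)
    (hHDdom : ∀ u : HD.domain, ∃ u1 : H1, J u1 = (u : H) ∧ Γ u1 = 0 ∧
      ∀ f : H1, Γ f = 0 → hform f u1 = (inner ℂ (J f) (HD u) : ℂ))
    (hHDmax : ∀ (u1 : H1) (w : H), Γ u1 = 0 →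
      (∀ f : H1, Γ f = 0 → hform f u1 = (inner ℂ (J f) w : ℂ)) →
      ∃ hu : J u1 ∈ HD.domain, HD ⟨J u1, hu⟩ = w)
    (z : ℂ)
    -- `z ∉ spec HN` and `z ∉ spec HD`
    (RN RD : H →L[ℂ] H) (hRN : ResolventAt HN z RN) (hRD : ResolventAt HD z RD)
    -- Dirichlet solution operator at `z`
    (Sz : (LinearMap.range (Γ : H1 →ₗ[ℂ] G) : Submodule ℂ G) →ₗ[ℂ] H1)
    (hSz1 : ∀ (φ : (LinearMap.range (Γ : H1 →ₗ[ℂ] G) : Submodule ℂ G)) (f : H1), Γ f = 0 →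
      hform f (Sz φ) = z * (inner ℂ (J f) (J (Sz φ)) : ℂ))
    (hSz2 : ∀ φ : (LinearMap.range (Γ : H1 →ₗ[ℂ] G) : Submodule ℂ G), Γ (Sz φ) = (φ : G))
    -- Dirichlet solution operator at `z̄`
    (Szb : (LinearMap.range (Γ : H1 →ₗ[ℂ] G) : Submodule ℂ G) →ₗ[ℂ] H1)
    (hSzb1 : ∀ (φ : (LinearMap.range (Γ : H1 →ₗ[ℂ] G) : Submodule ℂ G)) (f : H1), Γ f = 0 →
      hform f (Szb φ) = (starRingEnd ℂ) z * (inner ℂ (J f) (J (Szb φ)) : ℂ))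
    (hSzb2 : ∀ φ : (LinearMap.range (Γ : H1 →ₗ[ℂ] G) : Submodule ℂ G), Γ (Szb φ) = (φ : G)) :
    ∀ f : H, ∃ φ : (LinearMap.range (Γ : H1 →ₗ[ℂ] G) : Submodule ℂ G),
      (∀ (η : (LinearMap.range (Γ : H1 →ₗ[ℂ] G) : Submodule ℂ G)) (g : H1), Γ g = (η : G) →
        hform g (Sz φ) - z * (inner ℂ (J g) (J (Sz φ)) : ℂ) =
          (inner ℂ (J (Szb η)) f : ℂ)) ∧
      RN f - RD f = J (Sz φ) := by
  intro f
  obtain ⟨u, hJu, -, hu⟩ := hRN.exists_shiftedForm_eq_inner (fun _ => True)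
    (fun v => (hHNdom v).imp fun _ ⟨hJ, hform_eq⟩ => ⟨hJ, trivial, fun g _ => hform_eq g⟩) f
  obtain ⟨w, hJw, hΓw, hw⟩ := hRD.exists_shiftedForm_eq_inner (Γ · = 0) hHDdom f
  have huw : IsWeakSolution Γ hform J z (u - w) := fun g hg => by
    rw [shiftedForm_sub_right hpol, hu g trivial, hw g hg, sub_self]
  let φ : LinearMap.range (Γ : H1 →ₗ[ℂ] G) := ⟨Γ (u - w), u - w, rfl⟩
  have hSφ : Sz φ = u - w :=
    IsWeakSolution.eq_of_map_eq hpol hJinj hHDmax hRD (fun g hg => sub_eq_zero.mpr (hSz1 φ g hg))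
      huw (hSz2 φ)
  refine ⟨φ, fun η g hg => ?_, by rw [hSφ, map_sub, hJu, hJw]⟩
  rw [hSφ]
  exact shiftedForm_sub_eq_inner hpol (fun g => hu g trivial) hΓw huw
    (fun g hg => sub_eq_zero.mpr (hSzb1 η g hg)) (by rw [hg, hSzb2])

/-- **Krein's resolvent formula, weak form.** Let `(Γ, G)` be a boundary
pair for `h` with Neumann operator `HN`, Dirichlet operator `HD`, Dirichlet solution
operators `S(·)` and weak DtN operators `Λ̃(·)`.  For `z ∉ spec HD ∪ spec HN`,
`(HN - z)⁻¹ - (HD - z)⁻¹ = S(z) Λ̃(z)⁻¹ S(z̄)*` as operators `H → H`: for every `f ∈ H`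
there is `φ ∈ ran Γ` with `Λ̃(z)φ = S(z̄)*f` (i.e. `l_z(φ,η) = ⟨f, S(z̄)η⟩_H` for all
`η ∈ ran Γ`) such that `(HN - z)⁻¹ f - (HD - z)⁻¹ f = S(z)φ`. -/
theorem krein_resolvent_formula
    {H H1 G : Type*}
    [NormedAddCommGroup H] [InnerProductSpace ℂ H] [CompleteSpace H]
    [NormedAddCommGroup H1] [InnerProductSpace ℂ H1] [CompleteSpace H1]
    [NormedAddCommGroup G] [InnerProductSpace ℂ G] [CompleteSpace G]
    (J : H1 →L[ℂ] H) (hJinj : Function.Injective J) (hJdense : DenseRange J)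
    (hform : H1 → H1 → ℂ)
    (hpol : ∀ u v : H1, (inner ℂ u v : ℂ) = (inner ℂ (J u) (J v) : ℂ) + hform u v)
    (Γ : H1 →L[ℂ] G)
    (hker : Dense (J '' ((LinearMap.ker (Γ : H1 →ₗ[ℂ] G) : Submodule ℂ H1) : Set H1)))
    (hran : Dense ((LinearMap.range (Γ : H1 →ₗ[ℂ] G) : Submodule ℂ G) : Set G))
    -- the Neumann operator `HN`, associated with the form `h`
    (HN : H →ₗ.[ℂ] H)
    (hHNdom : ∀ u : HN.domain, ∃ u1 : H1, J u1 = (u : H) ∧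
      ∀ f : H1, hform f u1 = (inner ℂ (J f) (HN u) : ℂ))
    (hHNmax : ∀ (u1 : H1) (v : H),
      (∀ f : H1, hform f u1 = (inner ℂ (J f) v : ℂ)) →
      ∃ hu : J u1 ∈ HN.domain, HN ⟨J u1, hu⟩ = v)
    -- the Dirichlet operator `HD`, associated with `h` restricted to `ker Γ`
    (HD : H →ₗ.[ℂ] H)
    (hHDdom : ∀ u : HD.domain, ∃ u1 : H1, J u1 = (u : H) ∧ Γ u1 = 0 ∧
      ∀ f : H1, Γ f = 0 → hform f u1 = (inner ℂ (J f) (HD u) : ℂ))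
    (hHDmax : ∀ (u1 : H1) (w : H), Γ u1 = 0 →
      (∀ f : H1, Γ f = 0 → hform f u1 = (inner ℂ (J f) w : ℂ)) →
      ∃ hu : J u1 ∈ HD.domain, HD ⟨J u1, hu⟩ = w)
    (z : ℂ)
    -- `z ∉ spec HN` and `z ∉ spec HD`
    (RN RD : H →L[ℂ] H) (hRN : ResolventAt HN z RN) (hRD : ResolventAt HD z RD)
    -- Dirichlet solution operator at `z`
    (Sz : (LinearMap.range (Γ : H1 →ₗ[ℂ] G) : Submodule ℂ G) →ₗ[ℂ] H1)
    (hSz1 : ∀ (φ : (LinearMap.range (Γ : H1 →ₗ[ℂ] G) : Submodule ℂ G)) (f : H1), Γ f = 0 →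
      hform f (Sz φ) = z * (inner ℂ (J f) (J (Sz φ)) : ℂ))
    (hSz2 : ∀ φ : (LinearMap.range (Γ : H1 →ₗ[ℂ] G) : Submodule ℂ G), Γ (Sz φ) = (φ : G))
    -- Dirichlet solution operator at `z̄`
    (Szb : (LinearMap.range (Γ : H1 →ₗ[ℂ] G) : Submodule ℂ G) →ₗ[ℂ] H1)
    (hSzb1 : ∀ (φ : (LinearMap.range (Γ : H1 →ₗ[ℂ] G) : Submodule ℂ G)) (f : H1), Γ f = 0 →
      hform f (Szb φ) = (starRingEnd ℂ) z * (inner ℂ (J f) (J (Szb φ)) : ℂ))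
    (hSzb2 : ∀ φ : (LinearMap.range (Γ : H1 →ₗ[ℂ] G) : Submodule ℂ G), Γ (Szb φ) = (φ : G)) :
    ∀ f : H, ∃ φ : (LinearMap.range (Γ : H1 →ₗ[ℂ] G) : Submodule ℂ G),
      (∀ (η : (LinearMap.range (Γ : H1 →ₗ[ℂ] G) : Submodule ℂ G)) (g : H1), Γ g = (η : G) →
        hform g (Sz φ) - z * (inner ℂ (J g) (J (Sz φ)) : ℂ) =
          (inner ℂ (J (Szb η)) f : ℂ)) ∧
      RN f - RD f = J (Sz φ) :=
  krein_resolvent_formula_general J hJinj hform hpol Γ HN hHNdom HD hHDdom hHDmax z RN RD hRN hRD Sz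
    hSz1 hSz2 Szb hSzb1 hSzb2
end
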